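/- Let M and N be positive definite ternary forms lying in the same genus and let p be a prime. Let A and B be integer 3×3 matrices whose columns form ℤ-bases of the finite-index subgroups Λ_p(M) and Λ_p(N) of ℤ³, respectively. Then the positive definite ternary forms v ↦ Q_M(A v) and v ↦ Q_N(B v) lie in the same genus. -/

import Mathlib

/-- A ternary quadratic form `Q(x,y,z) = ax² + by² + cz² + r·yz + s·zx + t·xy`
with integer coefficients. -/
structure TernaryForm where
  a : ℤ
  b : ℤ
  c : ℤ
  r : ℤ
  s : ℤ
  t : ℤ

/-- Evaluation of a ternary form on `R³` for any commutative ring `R`. -/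
def TernaryForm.eval {R : Type*} [CommRing R] (Q : TernaryForm) (v : Fin 3 → R) : R :=
  (Q.a : R) * v 0 ^ 2 + (Q.b : R) * v 1 ^ 2 + (Q.c : R) * v 2 ^ 2 +
    (Q.r : R) * v 1 * v 2 + (Q.s : R) * v 2 * v 0 + (Q.t : R) * v 0 * v 1

/-- A ternary form is positive definite if `Q(v) > 0` for all `v ≠ 0`. -/
def TernaryForm.PosDef (Q : TernaryForm) : Prop :=
  ∀ v : Fin 3 → ℤ, v ≠ 0 → 0 < Q.eval v

/-- The Gram matrix of a ternary form: the symmetric rational matrix `G`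
with `Q(v) = vᵀ G v`. -/
def TernaryForm.gram (Q : TernaryForm) : Matrix (Fin 3) (Fin 3) ℚ :=
  !![(Q.a : ℚ), (Q.t : ℚ) / 2, (Q.s : ℚ) / 2;
     (Q.t : ℚ) / 2, (Q.b : ℚ), (Q.r : ℚ) / 2;
     (Q.s : ℚ) / 2, (Q.r : ℚ) / 2, (Q.c : ℚ)]

/-- The discriminant of a ternary form: the determinant of its Gram matrix. -/
def TernaryForm.disc (Q : TernaryForm) : ℚ := Q.gram.det

/-- `(N, M)` is a representable pair by scaling `n` if `dN = n·dM` and there is a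
`ℤ`-linear map `T : ℤ³ → ℤ³` with `Q_N(T v) = n · Q_M(v)` for all `v`. -/
def RepPair (n : ℕ) (N M : TernaryForm) : Prop :=
  N.disc = (n : ℚ) * M.disc ∧
    ∃ T : (Fin 3 → ℤ) →ₗ[ℤ] (Fin 3 → ℤ), ∀ v, N.eval (T v) = (n : ℤ) * M.eval v

/-- The norm ideal of a subset `K ⊆ ℤ³`: the ideal of `ℤ` generated by `{Q(x) : x ∈ K}`. -/
def TernaryForm.normIdeal (Q : TernaryForm) (K : Set (Fin 3 → ℤ)) : Ideal ℤ :=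
  Ideal.span (Q.eval '' K)

/-- A ternary form is primitive if the norm ideal of `ℤ³` is all of `ℤ`. -/
def TernaryForm.Primitive (Q : TernaryForm) : Prop :=
  Q.normIdeal Set.univ = ⊤

/-- `Λ_p(N) = {x ∈ ℤ³ : Q_N(x + z) ≡ Q_N(z) (mod p) for all z ∈ ℤ³}`. -/
def LambdaSet (p : ℕ) (N : TernaryForm) : Set (Fin 3 → ℤ) :=
  {x | ∀ z : Fin 3 → ℤ, (p : ℤ) ∣ N.eval (x + z) - N.eval z}

/-- `M` is a `Γ_p`-descendant of `N` if there is a subgroup `K ≤ ℤ³` of index `p` with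
norm ideal `pℤ` and a group isomorphism `T : ℤ³ → K` with `Q_N(T v) = p · Q_M(v)`. -/
def GammaDescendant (p : ℕ) (M N : TernaryForm) : Prop :=
  ∃ K : AddSubgroup (Fin 3 → ℤ), K.index = p ∧
    N.normIdeal (K : Set (Fin 3 → ℤ)) = Ideal.span {(p : ℤ)} ∧
    ∃ T : (Fin 3 → ℤ) →+ (Fin 3 → ℤ), Function.Injective T ∧
      Set.range T = (K : Set (Fin 3 → ℤ)) ∧
      ∀ v, N.eval (T v) = (p : ℤ) * M.eval v

/-- `N` is `p`-hyperbolic with exponent `j` if over `ℤ_p` there are a unit `δ` and a basis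
`y₁, y₂, y₃` of `ℤ_p³` with `Q_N(a y₁ + b y₂ + c y₃) = ab + δ p^j c²`. -/
def IsHyperbolic (p : ℕ) [Fact p.Prime] (j : ℕ) (N : TernaryForm) : Prop :=
  ∃ δ : ℤ_[p], IsUnit δ ∧ ∃ B : Module.Basis (Fin 3) ℤ_[p] (Fin 3 → ℤ_[p]),
    ∀ a b c : ℤ_[p],
      N.eval (a • B 0 + b • B 1 + c • B 2) = a * b + δ * (p : ℤ_[p]) ^ j * c ^ 2

/-- Two ternary forms lie in the same genus if they are equivalent over `ℤ_ℓ`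
for every prime `ℓ`. -/
def SameGenus (M M' : TernaryForm) : Prop :=
  ∀ (ℓ : ℕ) [Fact ℓ.Prime], ∃ U : Matrix (Fin 3) (Fin 3) ℤ_[ℓ],
    IsUnit U.det ∧ ∀ v : Fin 3 → ℤ_[ℓ], M'.eval v = M.eval (U.mulVec v)

/-!
Fix a prime `ℓ` and `U ∈ GL₃(ℤ_ℓ)` with `Q_N = Q_M ∘ U`. The `ℤ_ℓ`-span of the columns of `A` is
`{x ∈ ℤ_ℓ³ : Q_M(x + z) ≡ Q_M(z) mod p for all z}`: both contain `p ℤ_ℓ³`, which is everything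
when `ℓ ≠ p`, and for `ℓ = p` every vector is an integer vector modulo `p ℤ_p³`. This set is defined
by the form alone, so `U` carries the one for `N` onto the one for `M`. Hence `U B = A C` with
`C ∈ GL₃(ℤ_ℓ)`, and `C` is an isometry from `Q_N ∘ B` to `Q_M ∘ A`.
-/

open Matrix

lemma Matrix.exists_mul_eq_of_range_le {R : Type*} [CommRing R] {m n k : Type*} [Fintype n]
    [Fintype k] [DecidableEq k] {A : Matrix m n R} {X : Matrix m k R}
    (h : LinearMap.range X.mulVecLin ≤ LinearMap.range A.mulVecLin) : ∃ C, A * C = X := by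
  choose cols hcols using fun j => h ⟨Pi.single j 1, rfl⟩
  refine ⟨(of cols)ᵀ, ext fun i j => ?_⟩
  simp only [mulVecLin_apply, mulVec_single_one] at hcols
  exact congrFun (hcols j) i

lemma Matrix.isUnit_det_of_mul_eq {R : Type*} [CommRing R] [IsDomain R] {n : Type*} [Fintype n]
    [DecidableEq n] {A B U C C' : Matrix n n R} (hA : A.det ≠ 0) (hU : IsUnit U.det)
    (hC : A * C = U * B) (hC' : B * C' = U⁻¹ * A) : IsUnit C.det := by
  have hACC' : A * (C * C') = A := by
    rw [← mul_assoc, hC, mul_assoc, hC', ← mul_assoc, mul_nonsing_inv _ hU, one_mul]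
  have hdet : A.det * (C.det * C'.det) = A.det * 1 := by
    rw [mul_one, ← det_mul, ← det_mul, hACC']
  exact IsUnit.of_mul_eq_one _ (mul_left_cancel₀ hA hdet)

lemma PadicInt.isUnit_natCast_of_ne {ℓ p : ℕ} [Fact ℓ.Prime] (hp : p.Prime) (h : ℓ ≠ p) :
    IsUnit (p : ℤ_[ℓ]) := by
  rw [isUnit_iff, norm_natCast_eq_one_iff]
  exact (Nat.coprime_primes Fact.out hp).mpr h

lemma PadicInt.exists_intCast_add_mul {p : ℕ} [Fact p.Prime] (x : ℤ_[p]) :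
    ∃ (m : ℤ) (y : ℤ_[p]), x = m + p * y := by
  obtain ⟨n, -, hn⟩ := exists_mem_range x
  rw [maximalIdeal_eq_span_p, Ideal.mem_span_singleton'] at hn
  obtain ⟨y, hy⟩ := hn
  exact ⟨n, y, by rw [mul_comm, hy]; push_cast; ring⟩

namespace TernaryForm

variable {R S : Type*} [CommRing R] [CommRing S]

def polar (Q : TernaryForm) (x z : Fin 3 → R) : R := Q.eval (x + z) - Q.eval x - Q.eval z

lemma eval_smul (Q : TernaryForm) (c : R) (x : Fin 3 → R) :
    Q.eval (c • x) = c ^ 2 * Q.eval x := by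
  simp only [eval, Pi.smul_apply, smul_eq_mul]; ring

lemma polar_smul_left (Q : TernaryForm) (c : R) (x z : Fin 3 → R) :
    Q.polar (c • x) z = c * Q.polar x z := by
  simp only [polar, eval, Pi.add_apply, Pi.smul_apply, smul_eq_mul]; ring

lemma polar_eq_sum_single (Q : TernaryForm) (x z : Fin 3 → R) :
    Q.polar x z = ∑ i, z i * Q.polar x (Pi.single i 1) := by
  simp [polar, eval, Fin.sum_univ_three]; ring

lemma eval_map (Q : TernaryForm) (f : R →+* S) (x : Fin 3 → R) :
    Q.eval (f ∘ x) = f (Q.eval x) := by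
  simp [eval]

lemma polar_map (Q : TernaryForm) (f : R →+* S) (x z : Fin 3 → R) :
    Q.polar (f ∘ x) (f ∘ z) = f (Q.polar x z) := by
  simp [polar, eval]

@[simp]
lemma eval_zero (Q : TernaryForm) : Q.eval (0 : Fin 3 → R) = 0 := by
  simp [eval]

lemma eval_add_sub_eval (Q : TernaryForm) (x z : Fin 3 → R) :
    Q.eval (x + z) - Q.eval z = Q.eval x + Q.polar x z := by
  rw [polar]; ring

lemma forall_dvd_eval_add_sub_iff {Q : TernaryForm} {d : R} {x : Fin 3 → R} :
    (∀ z, d ∣ Q.eval (x + z) - Q.eval z) ↔ d ∣ Q.eval x ∧ ∀ z, d ∣ Q.polar x z := by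
  simp only [eval_add_sub_eval]
  refine ⟨fun h => ?_, fun ⟨hQ, hpolar⟩ z => dvd_add hQ (hpolar z)⟩
  have hQ : d ∣ Q.eval x := by simpa [polar] using h 0
  exact ⟨hQ, fun z => by simpa using dvd_sub (h z) hQ⟩

/-- `LambdaSet` over an arbitrary commutative ring: `LambdaSet p Q` is definitionally
`Q.lambda (p : ℤ)`. -/
def lambda (Q : TernaryForm) (d : R) : Submodule R (Fin 3 → R) where
  carrier := {x | ∀ z, d ∣ Q.eval (x + z) - Q.eval z}
  zero_mem' z := by simp
  add_mem' {x y} hx hy z := by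
    simpa [add_assoc] using dvd_add (hx (y + z)) (hy z)
  smul_mem' c x hx := by
    obtain ⟨hQ, hpolar⟩ := forall_dvd_eval_add_sub_iff.mp hx
    refine forall_dvd_eval_add_sub_iff.mpr ⟨?_, fun z => ?_⟩
    · rw [eval_smul]; exact hQ.mul_left _
    · rw [polar_smul_left]; exact (hpolar z).mul_left _

lemma mem_lambda_iff {Q : TernaryForm} {d : R} {x : Fin 3 → R} :
    x ∈ Q.lambda d ↔ d ∣ Q.eval x ∧ ∀ i, d ∣ Q.polar x (Pi.single i 1) := by
  refine forall_dvd_eval_add_sub_iff.trans (and_congr_right fun _ => ?_)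
  refine ⟨fun h i => h _, fun h z => ?_⟩
  rw [polar_eq_sum_single]
  exact Finset.dvd_sum fun i _ => (h i).mul_left _

lemma smul_mem_lambda (Q : TernaryForm) (d : R) (y : Fin 3 → R) : d • y ∈ Q.lambda d := by
  rw [mem_lambda_iff, eval_smul]
  exact ⟨⟨d * Q.eval y, by ring⟩, fun i => by rw [polar_smul_left]; exact dvd_mul_right _ _⟩

lemma comp_mem_lambda {Q : TernaryForm} {d : R} (f : R →+* S) {x : Fin 3 → R}
    (hx : x ∈ Q.lambda d) : f ∘ x ∈ Q.lambda (f d) := by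
  rw [mem_lambda_iff] at hx ⊢
  refine ⟨by rw [eval_map]; exact map_dvd f hx.1, fun i => ?_⟩
  have hsingle : f ∘ (Pi.single i 1 : Fin 3 → R) = Pi.single i 1 := by
    funext j; simp [Pi.single_apply, apply_ite f]
  rw [← hsingle, polar_map]
  exact map_dvd f (hx.2 i)

lemma mem_lambdaSet_of_intCast_mem_lambda {p : ℕ} [Fact p.Prime] {Q : TernaryForm}
    {m : Fin 3 → ℤ} (h : Int.cast ∘ m ∈ Q.lambda (p : ℤ_[p])) : m ∈ LambdaSet p Q := by
  intro z
  have hz : (p : ℤ_[p]) ∣ Int.castRingHom ℤ_[p] (Q.eval (m + z) - Q.eval z) := by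
    rw [map_sub, ← eval_map, ← eval_map]
    convert h (Int.cast ∘ z) using 3 <;> ext <;> simp
  exact (PadicInt.norm_int_lt_one_iff_dvd _).mp ((PadicInt.norm_lt_one_iff_dvd _).mpr hz)

lemma exists_mul_eq_smul_one {p : ℕ} {Q : TernaryForm} {A : Matrix (Fin 3) (Fin 3) ℤ}
    (hA : Set.range A.mulVec = LambdaSet p Q) : ∃ W, A * W = (p : ℤ) • 1 := by
  refine Matrix.exists_mul_eq_of_range_le ?_
  rintro _ ⟨v, rfl⟩
  have : (p : ℤ) • v ∈ Set.range A.mulVec := hA ▸ smul_mem_lambda Q (p : ℤ) v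
  simpa [Matrix.smul_mulVec] using this

section ColumnSpan

variable {p : ℕ} {Q : TernaryForm} {A : Matrix (Fin 3) (Fin 3) ℤ}

lemma smul_mem_range_map_mulVecLin (hA : Set.range A.mulVec = LambdaSet p Q)
    (y : Fin 3 → R) : (p : R) • y ∈ LinearMap.range (A.map Int.cast).mulVecLin := by
  obtain ⟨W, hW⟩ := exists_mul_eq_smul_one hA
  refine ⟨W.map (Int.castRingHom R) *ᵥ y, ?_⟩
  rw [mulVecLin_apply, mulVec_mulVec]
  change (A.map (Int.castRingHom R) * _) *ᵥ y = _
  rw [← Matrix.map_mul, hW]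
  ext i
  simp [Matrix.map_natCast, mulVec_diagonal]

lemma range_map_mulVecLin_le_lambda (hA : Set.range A.mulVec = LambdaSet p Q) :
    LinearMap.range (A.map (Int.cast : ℤ → R)).mulVecLin ≤ Q.lambda (p : R) := by
  rw [range_mulVecLin, Submodule.span_le]
  rintro _ ⟨j, rfl⟩
  have hcol : Aᵀ j ∈ LambdaSet p Q := hA ▸ ⟨Pi.single j 1, mulVec_single_one A j⟩
  have := comp_mem_lambda (Int.castRingHom R) hcol
  rw [map_natCast] at this
  exact this

lemma lambda_le_range_map_mulVecLin {ℓ : ℕ} [Fact ℓ.Prime] (hp : p.Prime)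
    (hA : Set.range A.mulVec = LambdaSet p Q) :
    Q.lambda (p : ℤ_[ℓ]) ≤ LinearMap.range (A.map Int.cast).mulVecLin := by
  intro x hx
  by_cases hℓp : ℓ = p
  · subst hℓp
    set f := Int.castRingHom ℤ_[ℓ]
    choose m y hxy using fun i => PadicInt.exists_intCast_add_mul (x i)
    have hx_eq : x = f ∘ m + (ℓ : ℤ_[ℓ]) • y := funext fun i => by simp [hxy i, f]
    have hm : f ∘ m ∈ Q.lambda (ℓ : ℤ_[ℓ]) := by
      simpa [hx_eq] using sub_mem hx (smul_mem_lambda Q (ℓ : ℤ_[ℓ]) y)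
    obtain ⟨w, rfl⟩ : m ∈ Set.range A.mulVec := hA ▸ mem_lambdaSet_of_intCast_mem_lambda hm
    rw [hx_eq]
    exact add_mem ⟨f ∘ w, funext fun i => (RingHom.map_mulVec f A w i).symm⟩
      (smul_mem_range_map_mulVecLin hA y)
  · obtain ⟨u, hu⟩ := PadicInt.isUnit_natCast_of_ne hp hℓp
    have := smul_mem_range_map_mulVecLin hA ((↑u⁻¹ : ℤ_[ℓ]) • x)
    rwa [smul_smul, ← hu, Units.mul_inv, one_smul] at this

lemma range_map_mulVecLin_eq_lambda {ℓ : ℕ} [Fact ℓ.Prime] (hp : p.Prime)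
    (hA : Set.range A.mulVec = LambdaSet p Q) :
    LinearMap.range (A.map Int.cast).mulVecLin = Q.lambda (p : ℤ_[ℓ]) :=
  le_antisymm (range_map_mulVecLin_le_lambda hA) (lambda_le_range_map_mulVecLin hp hA)

end ColumnSpan

lemma det_ne_zero_of_range_mulVec_eq {p : ℕ} (hp : p ≠ 0) {Q : TernaryForm}
    {A : Matrix (Fin 3) (Fin 3) ℤ} (hA : Set.range A.mulVec = LambdaSet p Q) : A.det ≠ 0 := by
  obtain ⟨W, hW⟩ := exists_mul_eq_smul_one hA
  have hdet : A.det * W.det = (p : ℤ) ^ 3 := by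
    rw [← det_mul, hW, det_smul, det_one, mul_one, Fintype.card_fin]
  exact left_ne_zero_of_mul (hdet ▸ pow_ne_zero 3 (Int.natCast_ne_zero.mpr hp))

lemma lambda_map_le_of_isometry {M N : TernaryForm} {d : R} {U : Matrix (Fin 3) (Fin 3) R}
    (hU : IsUnit U.det) (hUMN : ∀ v, N.eval v = M.eval (U *ᵥ v)) :
    (N.lambda d).map U.mulVecLin ≤ M.lambda d := by
  rintro _ ⟨x, hx, rfl⟩ z
  obtain ⟨z, rfl⟩ := mulVec_surjective_iff_isUnit.mpr ((isUnit_iff_isUnit_det U).mpr hU) z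
  simpa [hUMN, mulVec_add] using hx z

lemma eval_nonsing_inv_mulVec {M N : TernaryForm} {U : Matrix (Fin 3) (Fin 3) R}
    (hU : IsUnit U.det) (hUMN : ∀ v, N.eval v = M.eval (U *ᵥ v)) (v : Fin 3 → R) :
    M.eval v = N.eval (U⁻¹ *ᵥ v) := by
  rw [hUMN, mulVec_mulVec, mul_nonsing_inv _ hU, one_mulVec]

lemma exists_mul_eq_mul_of_isometry {M N : TernaryForm} {d : R}
    {A B U : Matrix (Fin 3) (Fin 3) R} (hA : LinearMap.range A.mulVecLin = M.lambda d)
    (hB : LinearMap.range B.mulVecLin = N.lambda d) (hU : IsUnit U.det)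
    (hUMN : ∀ v, N.eval v = M.eval (U *ᵥ v)) : ∃ C, A * C = U * B := by
  refine exists_mul_eq_of_range_le ?_
  rw [mulVecLin_mul, LinearMap.range_comp, hA, hB]
  exact lambda_map_le_of_isometry hU hUMN

def comp (Q : TernaryForm) (A : Matrix (Fin 3) (Fin 3) ℤ) : TernaryForm where
  a := Q.eval (Aᵀ 0)
  b := Q.eval (Aᵀ 1)
  c := Q.eval (Aᵀ 2)
  r := Q.polar (Aᵀ 1) (Aᵀ 2)
  s := Q.polar (Aᵀ 2) (Aᵀ 0)
  t := Q.polar (Aᵀ 0) (Aᵀ 1)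

lemma eval_comp (Q : TernaryForm) (A : Matrix (Fin 3) (Fin 3) ℤ) (v : Fin 3 → R) :
    (Q.comp A).eval v = Q.eval (A.map Int.cast *ᵥ v) := by
  simp only [comp, eval, polar, mulVec, dotProduct, Fin.sum_univ_three, map_apply,
    transpose_apply, Pi.add_apply]
  push_cast
  ring

lemma eq_of_eval_eq {Q₁ Q₂ : TernaryForm} (h : ∀ v : Fin 3 → ℤ, Q₁.eval v = Q₂.eval v) :
    Q₁ = Q₂ := by
  have e₀ := h ![1, 0, 0]
  have e₁ := h ![0, 1, 0]
  have e₂ := h ![0, 0, 1]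
  have e₁₂ := h ![0, 1, 1]
  have e₂₀ := h ![1, 0, 1]
  have e₀₁ := h ![1, 1, 0]
  cases Q₁; cases Q₂
  simp [eval] at e₀ e₁ e₂ e₁₂ e₂₀ e₀₁
  congr <;> linarith

lemma eval_eq_eval_map_mulVec {Q Q' : TernaryForm} {A : Matrix (Fin 3) (Fin 3) ℤ}
    (h : ∀ v : Fin 3 → ℤ, Q'.eval v = Q.eval (A *ᵥ v)) (v : Fin 3 → R) :
    Q'.eval v = Q.eval (A.map Int.cast *ᵥ v) := by
  have hA : A.map (Int.cast : ℤ → ℤ) = A := by ext; simp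
  rw [eq_of_eval_eq (Q₁ := Q') (Q₂ := Q.comp A) fun w => by rw [h, eval_comp, hA], eval_comp]

end TernaryForm

open TernaryForm

theorem stmt_10_general (M N : TernaryForm) (hg : SameGenus M N)
    (p : ℕ) (hp : p.Prime) (A B : Matrix (Fin 3) (Fin 3) ℤ)
    (hA : Set.range A.mulVec = LambdaSet p M)
    (hB : Set.range B.mulVec = LambdaSet p N)
    (M' N' : TernaryForm)
    (hMA : ∀ v : Fin 3 → ℤ, M'.eval v = M.eval (A.mulVec v))
    (hNB : ∀ v : Fin 3 → ℤ, N'.eval v = N.eval (B.mulVec v)) :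
    SameGenus M' N' := by
  intro ℓ _
  obtain ⟨U, hU, hUMN⟩ := hg ℓ
  have hrangeA := range_map_mulVecLin_eq_lambda (ℓ := ℓ) hp hA
  have hrangeB := range_map_mulVecLin_eq_lambda (ℓ := ℓ) hp hB
  obtain ⟨C, hC⟩ := exists_mul_eq_mul_of_isometry hrangeA hrangeB hU hUMN
  obtain ⟨C', hC'⟩ := exists_mul_eq_mul_of_isometry hrangeB hrangeA
    (isUnit_nonsing_inv_det U hU) (eval_nonsing_inv_mulVec hU hUMN)
  have hAdet : (A.map (Int.cast : ℤ → ℤ_[ℓ])).det ≠ 0 := by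
    rw [← Int.cast_det]
    exact Int.cast_ne_zero.mpr (det_ne_zero_of_range_mulVec_eq hp.ne_zero hA)
  refine ⟨C, isUnit_det_of_mul_eq hAdet hU hC hC', fun v => ?_⟩
  rw [eval_eq_eval_map_mulVec hNB, eval_eq_eval_map_mulVec hMA, mulVec_mulVec, hC,
    ← mulVec_mulVec, ← hUMN]

/-- If `M` and `N` lie in the same genus, then the forms obtained by
restricting to `Λ_p(M)` and `Λ_p(N)` (via matrices whose columns are `ℤ`-bases of these
subgroups) lie in the same genus. -/
theorem stmt_10 (M N : TernaryForm) (hM : M.PosDef) (hN : N.PosDef) (hg : SameGenus M N)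
    (p : ℕ) (hp : p.Prime) (A B : Matrix (Fin 3) (Fin 3) ℤ)
    (hAinj : Function.Injective A.mulVec) (hA : Set.range A.mulVec = LambdaSet p M)
    (hBinj : Function.Injective B.mulVec) (hB : Set.range B.mulVec = LambdaSet p N)
    (M' N' : TernaryForm) (hM' : M'.PosDef) (hN' : N'.PosDef)
    (hMA : ∀ v : Fin 3 → ℤ, M'.eval v = M.eval (A.mulVec v))
    (hNB : ∀ v : Fin 3 → ℤ, N'.eval v = N.eval (B.mulVec v)) :
    SameGenus M' N' :=
  stmt_10_general M N hg p hp A B hA hB M' N' hMA hNB
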